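/- arXiv:1309.0867 — 8 statements merged into one kernel-verified Lean document; each statement's English description precedes it below -/
import Mathlib

section
/- For every x in X, the infimum distance (in the sup product metric) from x to the hyperplane {y : X | f y = 0} equals |f x| / (∑ i, ‖a i‖); that is, Metric.infDist x {y | f y = 0} = |f x| / (∑ i, ‖a i‖). -/
/-!
The hyperplane is a level set of the continuous linear functional `ℓ x = ∑ i, ⟪a i, x i⟫`, and in
any real normed space the distance from `x` to `{ℓ = c}` is `|ℓ x - c| / ‖ℓ‖`: `ℓ` is
`‖ℓ‖`-Lipschitz, and moving from `x` along any `v` with `ℓ v ≠ 0` reaches the level set after a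
distance `|ℓ x - c| * ‖v‖ / |ℓ v|`. For the sup norm on blocks, `‖ℓ‖ = ∑ i, ‖a i‖`: Cauchy–Schwarz
in each block gives `≤`, and the vector of norm `≤ 1` with blocks `a i / ‖a i‖` attains it.
-/

open scoped RealInnerProductSpace

open Metric

namespace ContinuousLinearMap

variable {E : Type*} [NormedAddCommGroup E] [NormedSpace ℝ E] (ℓ : E →L[ℝ] ℝ) (c : ℝ) (x : E)

theorem apply_sub_smul_eq {v : E} (hv : ℓ v ≠ 0) : ℓ (x - ((ℓ x - c) / ℓ v) • v) = c := by
  rw [map_sub, map_smul, smul_eq_mul, div_mul_cancel₀ _ hv, sub_sub_cancel]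

theorem infDist_setOf_apply_eq_mul_abs_le (v : E) :
    infDist x {y | ℓ y = c} * |ℓ v| ≤ |ℓ x - c| * ‖v‖ := by
  rcases eq_or_ne (ℓ v) 0 with hv | hv
  · simp only [hv, abs_zero, mul_zero]
    positivity
  have hdist : dist x (x - ((ℓ x - c) / ℓ v) • v) = |ℓ x - c| / |ℓ v| * ‖v‖ := by
    rw [dist_eq_norm, sub_sub_cancel, norm_smul, Real.norm_eq_abs, abs_div]
  calc infDist x {y | ℓ y = c} * |ℓ v|
      ≤ |ℓ x - c| / |ℓ v| * ‖v‖ * |ℓ v| := by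
        gcongr
        exact hdist ▸ infDist_le_dist_of_mem (ℓ.apply_sub_smul_eq c x hv)
    _ = |ℓ x - c| * ‖v‖ := by field_simp [abs_ne_zero.mpr hv]

theorem infDist_setOf_apply_eq (hℓ : ℓ ≠ 0) :
    infDist x {y | ℓ y = c} = |ℓ x - c| / ‖ℓ‖ := by
  have hnorm : 0 < ‖ℓ‖ := norm_pos_iff.mpr hℓ
  apply le_antisymm
  -- Rather than choosing `v` nearly norming `ℓ`, bound the operator norm of `d • ℓ`, `d` the distance.
  · have hd := infDist_nonneg (x := x) (s := {y | ℓ y = c})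
    have hbound : ‖infDist x {y | ℓ y = c} • ℓ‖ ≤ |ℓ x - c| := by
      refine opNorm_le_bound _ (abs_nonneg _) fun v ↦ ?_
      rw [smul_apply, norm_smul, Real.norm_of_nonneg hd, Real.norm_eq_abs]
      exact ℓ.infDist_setOf_apply_eq_mul_abs_le c x v
    rw [norm_smul, Real.norm_of_nonneg hd] at hbound
    rwa [le_div_iff₀ hnorm]
  · obtain ⟨v, hv⟩ : ∃ v, ℓ v ≠ 0 := by
      by_contra! h
      exact hℓ (ext h)
    have hne : Nonempty {y | ℓ y = c} := ⟨⟨_, ℓ.apply_sub_smul_eq c x hv⟩⟩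
    rw [infDist_eq_iInf]
    refine le_ciInf fun ⟨y, (hy : ℓ y = c)⟩ ↦ ?_
    rw [div_le_iff₀' hnorm, dist_eq_norm]
    calc |ℓ x - c| = ‖ℓ (x - y)‖ := by rw [map_sub, hy, Real.norm_eq_abs]
      _ ≤ ‖ℓ‖ * ‖x - y‖ := ℓ.le_opNorm _

end ContinuousLinearMap

theorem inner_inv_norm_smul_self {G : Type*} [NormedAddCommGroup G] [InnerProductSpace ℝ G]
    (v : G) : ⟪v, ‖v‖⁻¹ • v⟫ = ‖v‖ := by
  rcases eq_or_ne v 0 with rfl | hv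
  · simp
  rw [real_inner_smul_self_right]
  field_simp [norm_ne_zero_iff.mpr hv]

theorem norm_inv_norm_smul_le {G : Type*} [NormedAddCommGroup G] [NormedSpace ℝ G] (v : G) :
    ‖‖v‖⁻¹ • v‖ ≤ 1 := by
  rw [norm_smul, norm_inv, norm_norm]
  exact inv_mul_le_one_of_le₀ le_rfl (norm_nonneg v)

section PiInner

variable {ι : Type*} [Fintype ι] {F : ι → Type*} [∀ i, NormedAddCommGroup (F i)]
  [∀ i, InnerProductSpace ℝ (F i)] (a : ∀ i, F i)

noncomputable def piInnerSL : (∀ i, F i) →L[ℝ] ℝ :=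
  ∑ i, (innerSL ℝ (a i)).comp (ContinuousLinearMap.proj i)

theorem piInnerSL_apply (x : ∀ i, F i) : piInnerSL a x = ∑ i, ⟪a i, x i⟫ := by
  simp [piInnerSL]

theorem norm_piInnerSL : ‖piInnerSL a‖ = ∑ i, ‖a i‖ := by
  apply le_antisymm
  · refine ContinuousLinearMap.opNorm_le_bound _ (by positivity) fun x ↦ ?_
    rw [piInnerSL_apply, Real.norm_eq_abs, Finset.sum_mul]
    refine (Finset.abs_sum_le_sum_abs _ _).trans (Finset.sum_le_sum fun i _ ↦ ?_)
    exact (abs_real_inner_le_norm _ _).trans (by gcongr; exact norm_le_pi_norm x i)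
  · set u : ∀ i, F i := fun i ↦ ‖a i‖⁻¹ • a i
    have hu : ‖u‖ ≤ 1 :=
      (pi_norm_le_iff_of_nonneg zero_le_one).mpr fun i ↦ norm_inv_norm_smul_le (a i)
    have hau : piInnerSL a u = ∑ i, ‖a i‖ := by
      simp only [piInnerSL_apply, u, inner_inv_norm_smul_self]
    calc ∑ i, ‖a i‖ ≤ ‖piInnerSL a u‖ := hau ▸ Real.le_norm_self _
      _ ≤ ‖piInnerSL a‖ := (piInnerSL a).unit_le_opNorm u hu

theorem piInnerSL_ne_zero (ha : a ≠ 0) : piInnerSL a ≠ 0 := by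
  obtain ⟨i, hi⟩ := Function.ne_iff.mp ha
  refine ne_of_apply_ne norm ?_
  rw [norm_piInnerSL, ContinuousLinearMap.opNorm_zero]
  exact (Finset.sum_pos' (fun j _ ↦ norm_nonneg _) ⟨i, Finset.mem_univ i, norm_pos_iff.mpr hi⟩).ne'

end PiInner

theorem infDist_hyperplane_eq_general
    (m n : ℕ)
    (a : Fin m → EuclideanSpace ℝ (Fin n)) (ha : a ≠ 0) (b : ℝ)
    (f : (Fin m → EuclideanSpace ℝ (Fin n)) → ℝ)
    (hf : ∀ x, f x = (∑ i, ⟪a i, x i⟫) + b)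
    (x : Fin m → EuclideanSpace ℝ (Fin n)) :
    Metric.infDist x {y | f y = 0} = |f x| / (∑ i, ‖a i‖) := by
  have hlevel : {y | f y = 0} = {y | piInnerSL a y = -b} := by
    ext y
    simp only [Set.mem_ofPred_eq, hf, piInnerSL_apply]
    constructor <;> intro h <;> linarith
  rw [hlevel, (piInnerSL a).infDist_setOf_apply_eq (-b) x (piInnerSL_ne_zero a ha),
    norm_piInnerSL, hf, piInnerSL_apply, sub_neg_eq_add]

theorem infDist_hyperplane_eq
    (m n : ℕ) (hm : 1 ≤ m) (hn : 1 ≤ n)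
    (a : Fin m → EuclideanSpace ℝ (Fin n)) (ha : a ≠ 0) (b : ℝ)
    (f : (Fin m → EuclideanSpace ℝ (Fin n)) → ℝ)
    (hf : ∀ x, f x = (∑ i, ⟪a i, x i⟫) + b)
    (x : Fin m → EuclideanSpace ℝ (Fin n)) :
    Metric.infDist x {y | f y = 0} = |f x| / (∑ i, ‖a i‖) :=
  infDist_hyperplane_eq_general m n a ha b f hf x
end

section
/- If x : X satisfies f x ≥ 0, then the infimum distance (in the sup product metric) from x to the open half-space {y : X | f y < 0} equals f x / (∑ i, ‖a i‖); that is, Metric.infDist x {y | f y < 0} = f x / (∑ i, ‖a i‖). (This is the 'depth' of x in the predicate set {f ≥ 0}.) -/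
open scoped RealInnerProductSpace

/-!
The linear part `L = ∑ i, ⟪a i, ·⟫` of `f` has operator norm `∑ i, ‖a i‖` for the sup norm, the
bound being attained at `y i = ‖a i‖⁻¹ • a i`. In any real normed space the distance from a point `x`
with `c ≤ L x` to the open half-space `{L < c}` is `(L x - c) / ‖L‖`: every `y` in it has
`L x - c < L (x - y) ≤ ‖L‖ ‖x - y‖`, and moving from `x` against a vector almost norming `L` reaches
it within any larger distance.
-/

open Metric

namespace ContinuousLinearMap

section Halfspace

variable {E : Type*} [NormedAddCommGroup E] [NormedSpace ℝ E] (L : E →L[ℝ] ℝ)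

theorem exists_norm_lt_one_lt_apply {r : ℝ} (hr : r < ‖L‖) : ∃ v, ‖v‖ < 1 ∧ r < L v := by
  obtain ⟨v, hv, hrv⟩ := L.exists_lt_apply_of_lt_opNorm hr
  rcases le_or_gt 0 (L v) with hpos | hneg
  · exact ⟨v, hv, by rwa [Real.norm_of_nonneg hpos] at hrv⟩
  · exact ⟨-v, by rwa [norm_neg], by rwa [map_neg, ← Real.norm_of_nonpos hneg.le]⟩

theorem exists_apply_lt_dist_lt (hL : L ≠ 0) {c r : ℝ} {x : E} (hx : c ≤ L x)
    (hr : (L x - c) / ‖L‖ < r) : ∃ y, L y < c ∧ dist x y < r := by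
  have hr0 : 0 < r := (div_nonneg (sub_nonneg.2 hx) (norm_nonneg L)).trans_lt hr
  rw [div_lt_iff₀ (norm_pos_iff.2 hL), ← div_lt_iff₀' hr0] at hr
  obtain ⟨v, hv, hLv⟩ := L.exists_norm_lt_one_lt_apply hr
  refine ⟨x - r • v, ?_, ?_⟩
  · rw [div_lt_iff₀ hr0] at hLv
    rw [map_sub, map_smul, smul_eq_mul]
    linarith
  · rw [dist_eq_norm, sub_sub_cancel, norm_smul, Real.norm_of_nonneg hr0.le]
    exact mul_lt_of_lt_one_right hr0 hv

theorem infDist_setOf_apply_lt (hL : L ≠ 0) {c : ℝ} {x : E} (hx : c ≤ L x) :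
    infDist x {y | L y < c} = (L x - c) / ‖L‖ := by
  have hne : {y | L y < c}.Nonempty :=
    let ⟨y, hy, _⟩ := L.exists_apply_lt_dist_lt hL hx (lt_add_one _)
    ⟨y, hy⟩
  refine le_antisymm (le_of_forall_gt_imp_ge_of_dense fun r hr => ?_)
    ((le_infDist hne).2 fun y hy => ?_)
  · obtain ⟨y, hy, hxy⟩ := L.exists_apply_lt_dist_lt hL hx hr
    exact (infDist_le_dist_of_mem (s := {y | L y < c}) hy).trans hxy.le
  · rw [div_le_iff₀ (norm_pos_iff.2 hL)]
    calc L x - c ≤ L (x - y) := by rw [map_sub]; exact sub_le_sub_left hy.le _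
      _ ≤ ‖L‖ * ‖x - y‖ := (Real.le_norm_self _).trans (L.le_opNorm _)
      _ = dist x y * ‖L‖ := by rw [dist_eq_norm, mul_comm]

end Halfspace

section InnerProductPi

variable {ι : Type*} [Fintype ι] {E : ι → Type*} [∀ i, NormedAddCommGroup (E i)]
  [∀ i, InnerProductSpace ℝ (E i)]

theorem opNorm_sum_innerSL_comp_proj (a : ∀ i, E i) :
    ‖∑ i, (innerSL ℝ (a i)).comp (proj i)‖ = ∑ i, ‖a i‖ := by
  refine le_antisymm
    (opNorm_le_bound _ (Finset.sum_nonneg fun i _ => norm_nonneg _) fun y => ?_) ?_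
  · simp only [sum_apply, coe_comp, Function.comp_apply, proj_apply, innerSL_apply_apply,
      Finset.sum_mul]
    refine (norm_sum_le _ _).trans (Finset.sum_le_sum fun i _ => ?_)
    exact (norm_inner_le_norm _ _).trans
      (mul_le_mul_of_nonneg_left (norm_le_pi_norm y i) (norm_nonneg _))
  · set u : ∀ i, E i := fun i => ‖a i‖⁻¹ • a i
    have hu : ‖u‖ ≤ 1 := (pi_norm_le_iff_of_nonneg zero_le_one).2 fun i => by
      rw [norm_smul, norm_inv, norm_norm]
      exact inv_mul_le_one_of_le₀ le_rfl (norm_nonneg _)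
    have hau : ∀ i, ⟪a i, u i⟫ = ‖a i‖ := fun i => by
      rw [real_inner_smul_right, real_inner_self_eq_norm_sq]
      rcases eq_or_ne ‖a i‖ 0 with h | h
      · simp [h]
      · field_simp
    calc ∑ i, ‖a i‖ = (∑ i, (innerSL ℝ (a i)).comp (proj i)) u := by
          simp only [sum_apply, coe_comp, Function.comp_apply, proj_apply, innerSL_apply_apply,
            hau]
      _ ≤ ‖∑ i, (innerSL ℝ (a i)).comp (proj i)‖ :=
          (Real.le_norm_self _).trans (unit_le_opNorm _ _ hu)

end InnerProductPi

end ContinuousLinearMap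

theorem infDist_open_halfspace_eq_general
    (m n : ℕ)
    (a : Fin m → EuclideanSpace ℝ (Fin n)) (ha : a ≠ 0) (b : ℝ)
    (f : (Fin m → EuclideanSpace ℝ (Fin n)) → ℝ)
    (hf : ∀ x, f x = (∑ i, ⟪a i, x i⟫) + b)
    (x : Fin m → EuclideanSpace ℝ (Fin n)) (hx : f x ≥ 0) :
    Metric.infDist x {y | f y < 0} = f x / (∑ i, ‖a i‖) := by
  set L := ∑ i, (innerSL ℝ (a i)).comp (ContinuousLinearMap.proj i)
  have hfL : ∀ y, f y = L y - -b := fun y => by simp [L, hf]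
  have hnorm : ‖L‖ = ∑ i, ‖a i‖ := ContinuousLinearMap.opNorm_sum_innerSL_comp_proj a
  have hL : L ≠ 0 := by
    rw [← norm_ne_zero_iff, hnorm]
    contrapose! ha
    funext i
    have hsum := (Fintype.sum_eq_zero_iff_of_nonneg fun i => norm_nonneg (a i)).1 ha
    exact norm_eq_zero.1 (congrFun hsum i)
  simp_rw [hfL, sub_neg, ← hnorm]
  exact L.infDist_setOf_apply_lt hL (by linarith [hfL x])

theorem infDist_open_halfspace_eq
    (m n : ℕ) (hm : 1 ≤ m) (hn : 1 ≤ n)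
    (a : Fin m → EuclideanSpace ℝ (Fin n)) (ha : a ≠ 0) (b : ℝ)
    (f : (Fin m → EuclideanSpace ℝ (Fin n)) → ℝ)
    (hf : ∀ x, f x = (∑ i, ⟪a i, x i⟫) + b)
    (x : Fin m → EuclideanSpace ℝ (Fin n)) (hx : f x ≥ 0) :
    Metric.infDist x {y | f y < 0} = f x / (∑ i, ‖a i‖) :=
  infDist_open_halfspace_eq_general m n a ha b f hf x hx
end

section
/- If x : X satisfies f x < 0, then the infimum distance (in the sup product metric) from x to the closed half-space {y : X | f y ≥ 0} equals -(f x) / (∑ i, ‖a i‖); that is, Metric.infDist x {y | f y ≥ 0} = -(f x) / (∑ i, ‖a i‖). -/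
/-!
For the sup metric, `x ↦ ∑ i, ⟪a i, x i⟫ + b` is Lipschitz with constant `∑ i, ‖a i‖`, so
every point of the half-space is at distance at least `-f x / ∑ i, ‖a i‖` from `x`. The bound
is attained: moving every block `x i` by that distance in the direction of `a i` raises `f` by
exactly `-f x`.
-/

open scoped RealInnerProductSpace NNReal

open Metric in
theorem LipschitzWith.infDist_setOf_nonneg_eq {X : Type*} [PseudoMetricSpace X] {g : X → ℝ}
    {K : ℝ≥0} (hg : LipschitzWith K g) (hK : 0 < K) {x y : X} (hy : 0 ≤ g y)
    (hxy : dist x y ≤ -g x / K) :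
    infDist x {z | 0 ≤ g z} = -g x / K := by
  refine le_antisymm ((infDist_le_dist_of_mem (s := {z | 0 ≤ g z}) hy).trans hxy)
    ((le_infDist ⟨y, hy⟩).2 fun z (hz : 0 ≤ g z) => ?_)
  rw [div_le_iff₀' (by exact_mod_cast hK)]
  have hgzx : g z - g x ≤ K * dist x z :=
    dist_comm x z ▸ (le_abs_self _).trans (hg.dist_le_mul z x)
  linarith

theorem lipschitzWith_sum_inner {ι E : Type*} [Fintype ι] [NormedAddCommGroup E]
    [InnerProductSpace ℝ E] (a : ι → E) :
    LipschitzWith (∑ i, ‖a i‖₊) fun x : ι → E => ∑ i, ⟪a i, x i⟫ := by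
  refine LipschitzWith.of_dist_le_mul fun z x => ?_
  rw [Real.dist_eq, ← Finset.sum_sub_distrib]
  push_cast
  rw [Finset.sum_mul]
  refine (Finset.abs_sum_le_sum_abs _ _).trans (Finset.sum_le_sum fun i _ => ?_)
  calc |⟪a i, z i⟫ - ⟪a i, x i⟫| = |⟪a i, z i - x i⟫| := by rw [inner_sub_right]
    _ ≤ ‖a i‖ * ‖z i - x i‖ := abs_real_inner_le_norm _ _
    _ ≤ ‖a i‖ * dist z x := by
      rw [← dist_eq_norm]
      exact mul_le_mul_of_nonneg_left (dist_le_pi_dist z x i) (norm_nonneg _)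

theorem real_inner_div_norm_smul_self {E : Type*} [NormedAddCommGroup E]
    [InnerProductSpace ℝ E] (v : E) (t : ℝ) : ⟪v, (t / ‖v‖) • v⟫ = t * ‖v‖ := by
  rcases eq_or_ne v 0 with rfl | hv
  · simp
  · rw [real_inner_smul_self_right]
    field_simp [norm_ne_zero_iff.2 hv]

theorem norm_div_norm_smul_self_le {E : Type*} [NormedAddCommGroup E] [NormedSpace ℝ E]
    (v : E) (t : ℝ) : ‖(t / ‖v‖) • v‖ ≤ |t| := by
  rcases eq_or_ne v 0 with rfl | hv
  · simp
  · rw [norm_smul, norm_div, norm_norm, div_mul_cancel₀ _ (norm_ne_zero_iff.2 hv),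
      Real.norm_eq_abs]

theorem infDist_closed_halfspace_eq_general
    (m n : ℕ)
    (a : Fin m → EuclideanSpace ℝ (Fin n)) (ha : a ≠ 0) (b : ℝ)
    (f : (Fin m → EuclideanSpace ℝ (Fin n)) → ℝ)
    (hf : ∀ x, f x = (∑ i, ⟪a i, x i⟫) + b)
    (x : Fin m → EuclideanSpace ℝ (Fin n)) (hx : f x < 0) :
    Metric.infDist x {y | f y ≥ 0} = -(f x) / (∑ i, ‖a i‖) := by
  have hf_lip : LipschitzWith (∑ i, ‖a i‖₊) f := by
    simpa [funext hf] using (lipschitzWith_sum_inner a).add (LipschitzWith.const b)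
  obtain ⟨j, hj⟩ := Function.ne_iff.1 ha
  have hK : 0 < ∑ i, ‖a i‖₊ :=
    Finset.sum_pos' (fun _ _ => by positivity) ⟨j, Finset.mem_univ j, nnnorm_pos.2 hj⟩
  have hK' : 0 < ∑ i, ‖a i‖ := by
    simpa only [NNReal.coe_sum, coe_nnnorm] using NNReal.coe_pos.2 hK
  set t := -f x / ∑ i, ‖a i‖
  have ht : 0 ≤ t := div_nonneg (by linarith) hK'.le
  set y : Fin m → EuclideanSpace ℝ (Fin n) := fun i => x i + (t / ‖a i‖) • a i
  have hfy : f y = 0 := by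
    simp only [hf, y, inner_add_right, real_inner_div_norm_smul_self, Finset.sum_add_distrib,
      ← Finset.mul_sum]
    linarith [hf x, div_mul_cancel₀ (-f x) hK'.ne']
  have hxy : dist x y ≤ t := (dist_pi_le_iff ht).2 fun i => by
    simpa [dist_eq_norm', y, abs_of_nonneg ht] using norm_div_norm_smul_self_le (a i) t
  simpa using hf_lip.infDist_setOf_nonneg_eq hK hfy.symm.le (by simpa using hxy)

theorem infDist_closed_halfspace_eq
    (m n : ℕ) (hm : 1 ≤ m) (hn : 1 ≤ n)
    (a : Fin m → EuclideanSpace ℝ (Fin n)) (ha : a ≠ 0) (b : ℝ)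
    (f : (Fin m → EuclideanSpace ℝ (Fin n)) → ℝ)
    (hf : ∀ x, f x = (∑ i, ⟪a i, x i⟫) + b)
    (x : Fin m → EuclideanSpace ℝ (Fin n)) (hx : f x < 0) :
    Metric.infDist x {y | f y ≥ 0} = -(f x) / (∑ i, ‖a i‖) :=
  infDist_closed_halfspace_eq_general m n a ha b f hf x hx
end

section
/- The distance from a point to the hyperplane {f = 0} is attained: for every x : X there exists y : X with f y = 0 and dist x y = |f x| / (∑ i, ‖a i‖), where dist is the sup product metric. -/
open scoped RealInnerProductSpace

/-!
Normalise every nonzero block of `a` to a unit vector: the resulting direction `u` has sup norm `1`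
and `∑ i, ⟪a i, u i⟫ = ∑ i, ‖a i‖`. Moving from `x` along `u` by `f x / ∑ i, ‖a i‖` reaches the
hyperplane, and the sup distance covered is exactly that step length.
-/

theorem real_inner_inv_norm_smul_self {E : Type*} [NormedAddCommGroup E] [InnerProductSpace ℝ E]
    (a : E) : ⟪a, ‖a‖⁻¹ • a⟫ = ‖a‖ := by
  rw [real_inner_smul_right, real_inner_self_eq_norm_mul_norm]
  rcases eq_or_ne ‖a‖ 0 with h | h
  · simp [h]
  · field_simp

theorem pi_norm_inv_norm_smul {ι : Type*} [Fintype ι] {E : ι → Type*}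
    [∀ i, NormedAddCommGroup (E i)] [∀ i, NormedSpace ℝ (E i)] {a : ∀ i, E i} (ha : a ≠ 0) :
    ‖fun i => ‖a i‖⁻¹ • a i‖ = 1 := by
  obtain ⟨i₀, hi₀⟩ : ∃ i, a i ≠ 0 := Function.ne_iff.mp ha
  refine le_antisymm ((pi_norm_le_iff_of_nonneg zero_le_one).2 fun i => ?_) ?_
  · rcases eq_or_ne (a i) 0 with h | h
    · simp [h]
    · exact (norm_smul_inv_norm h).le
  · have := norm_le_pi_norm (fun i => ‖a i‖⁻¹ • a i) i₀
    rwa [norm_smul, norm_inv, norm_norm, inv_mul_cancel₀ (norm_ne_zero_iff.2 hi₀)] at this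

theorem exists_affine_eq_zero_dist_eq {X : Type*} [SeminormedAddCommGroup X] [NormedSpace ℝ X]
    (ℓ : X →ₗ[ℝ] ℝ) (b : ℝ) {u : X} (hu : ‖u‖ = 1) (hℓu : 0 < ℓ u) (x : X) :
    ∃ y, ℓ y + b = 0 ∧ dist x y = |ℓ x + b| / ℓ u := by
  set c := (ℓ x + b) / ℓ u
  refine ⟨x - c • u, ?_, ?_⟩
  · simp only [map_sub, map_smul, smul_eq_mul, c]
    field_simp
    ring
  · rw [dist_eq_norm, sub_sub_cancel, norm_smul, hu, mul_one, Real.norm_eq_abs, abs_div,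
      abs_of_pos hℓu]

section PiInner

variable {ι : Type*} [Fintype ι] {E : ι → Type*} [∀ i, NormedAddCommGroup (E i)]
  [∀ i, InnerProductSpace ℝ (E i)]

noncomputable def piInnerₗ (a : ∀ i, E i) : (∀ i, E i) →ₗ[ℝ] ℝ :=
  ∑ i, (innerₛₗ ℝ (a i)).comp (LinearMap.proj i)

@[simp]
theorem piInnerₗ_apply (a x : ∀ i, E i) : piInnerₗ a x = ∑ i, ⟪a i, x i⟫ := by
  simp [piInnerₗ]

theorem exists_pi_inner_add_eq_zero_dist_eq {a : ∀ i, E i} (ha : a ≠ 0)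
    (b : ℝ) (x : ∀ i, E i) :
    ∃ y : ∀ i, E i, (∑ i, ⟪a i, y i⟫) + b = 0 ∧
      dist x y = |(∑ i, ⟪a i, x i⟫) + b| / ∑ i, ‖a i‖ := by
  have hS : piInnerₗ a (fun i => ‖a i‖⁻¹ • a i) = ∑ i, ‖a i‖ := by
    simp only [piInnerₗ_apply, real_inner_inv_norm_smul_self]
  have hpos : 0 < ∑ i, ‖a i‖ := by
    obtain ⟨i₀, hi₀⟩ : ∃ i, a i ≠ 0 := Function.ne_iff.mp ha
    exact Finset.sum_pos' (fun i _ => norm_nonneg _) ⟨i₀, Finset.mem_univ _, norm_pos_iff.2 hi₀⟩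
  simpa only [piInnerₗ_apply, hS] using
    exists_affine_eq_zero_dist_eq (piInnerₗ a) b (pi_norm_inv_norm_smul ha) (hS ▸ hpos) x

end PiInner

theorem dist_to_hyperplane_attained_general
    (m n : ℕ)
    (a : Fin m → EuclideanSpace ℝ (Fin n)) (ha : a ≠ 0) (b : ℝ)
    (f : (Fin m → EuclideanSpace ℝ (Fin n)) → ℝ)
    (hf : ∀ x, f x = (∑ i, ⟪a i, x i⟫) + b)
    (x : Fin m → EuclideanSpace ℝ (Fin n)) :
    ∃ y : Fin m → EuclideanSpace ℝ (Fin n),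
      f y = 0 ∧ dist x y = |f x| / (∑ i, ‖a i‖) := by
  simpa only [hf] using exists_pi_inner_add_eq_zero_dist_eq ha b x

theorem dist_to_hyperplane_attained
    (m n : ℕ) (hm : 1 ≤ m) (hn : 1 ≤ n)
    (a : Fin m → EuclideanSpace ℝ (Fin n)) (ha : a ≠ 0) (b : ℝ)
    (f : (Fin m → EuclideanSpace ℝ (Fin n)) → ℝ)
    (hf : ∀ x, f x = (∑ i, ⟪a i, x i⟫) + b)
    (x : Fin m → EuclideanSpace ℝ (Fin n)) :
    ∃ y : Fin m → EuclideanSpace ℝ (Fin n),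
      f y = 0 ∧ dist x y = |f x| / (∑ i, ‖a i‖) :=
  dist_to_hyperplane_attained_general m n a ha b f hf x
end

section
/- Distance to a half-space restricted to a diagonal: let k l : Fin m with k ≠ l, and assume that the merged coefficient family is nonzero, i.e. a k + a l ≠ 0 or a i ≠ 0 for some i ∉ {k, l}. Then for every x : X with x k = x l, the infimum distance (in the sup product metric) from x to the set {y : X | f y = 0 ∧ y k = y l} equals |f x| / (‖a k + a l‖ + ∑ over i ∈ Finset.univ \ {k, l} of ‖a i‖). -/
/-!
On the diagonal `{w | w k = w l}` the functional `w ↦ ∑ i, ⟪a i, w i⟫` only sees the merged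
coefficient `a k + a l` on the common block, so its dual norm with respect to the sup metric is
`C = ‖a k + a l‖ + ∑_{i ∉ {k, l}} ‖a i‖`. Cauchy–Schwarz block by block gives
`|f x| = |f x - f z| ≤ C * dist x z` for every `z` in the set, and moving `x` by `f x / C` along
the unit directions of the merged coefficients (equal on blocks `k` and `l`) reaches the set at
distance exactly `|f x| / C`.
-/

open scoped RealInnerProductSpace
open Finset NormedSpace

lemma Metric.infDist_eq_of_mem_of_forall_le {X : Type*} [PseudoMetricSpace X] {x y : X}
    {s : Set X} {r : ℝ} (hy : y ∈ s) (hxy : dist x y ≤ r) (hr : ∀ z ∈ s, r ≤ dist x z) :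
    Metric.infDist x s = r :=
  le_antisymm ((Metric.infDist_le_dist_of_mem hy).trans hxy) ((Metric.le_infDist ⟨y, hy⟩).2 hr)

lemma Finset.sum_univ_eq_add_add_sum_sdiff_pair {ι M : Type*} [Fintype ι] [DecidableEq ι]
    [AddCommMonoid M] (g : ι → M) {k l : ι} (hkl : k ≠ l) :
    ∑ i, g i = g k + g l + ∑ i ∈ univ \ {k, l}, g i := by
  rw [← sum_sdiff (subset_univ {k, l}), sum_pair hkl, add_comm]

lemma NormedSpace.norm_normalize_le_one {V : Type*} [NormedAddCommGroup V] [NormedSpace ℝ V]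
    (v : V) : ‖normalize v‖ ≤ 1 := by
  rcases eq_or_ne v 0 with rfl | hv
  · simp
  · exact (norm_normalize_eq_one_iff.2 hv).le

lemma NormedSpace.real_inner_normalize_right {E : Type*} [NormedAddCommGroup E]
    [InnerProductSpace ℝ E] (v : E) : ⟪v, normalize v⟫ = ‖v‖ := by
  rcases eq_or_ne v 0 with rfl | hv
  · simp
  · rw [normalize, real_inner_smul_right, real_inner_self_eq_norm_sq]
    field_simp [norm_ne_zero_iff.2 hv]

section Merged

variable {ι E : Type*} [DecidableEq ι] [NormedAddCommGroup E] {a : ι → E} {k l : ι}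

section

variable [Fintype ι]

noncomputable def mergedNorm (a : ι → E) (k l : ι) : ℝ :=
  ‖a k + a l‖ + ∑ i ∈ univ \ {k, l}, ‖a i‖

lemma mergedNorm_pos (h : a k + a l ≠ 0 ∨ ∃ i ∈ univ \ {k, l}, a i ≠ 0) :
    0 < mergedNorm a k l := by
  have hsum : 0 ≤ ∑ i ∈ univ \ {k, l}, ‖a i‖ := sum_nonneg fun i _ => norm_nonneg (a i)
  rcases h with h | ⟨i, hi, hai⟩
  · exact add_pos_of_pos_of_nonneg (norm_pos_iff.2 h) hsum
  · exact add_pos_of_nonneg_of_pos (norm_nonneg _)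
      (sum_pos' (fun j _ => norm_nonneg (a j)) ⟨i, hi, norm_pos_iff.2 hai⟩)

end

variable [InnerProductSpace ℝ E]

noncomputable def mergedDir (a : ι → E) (k l : ι) (i : ι) : E :=
  if i = k ∨ i = l then normalize (a k + a l) else normalize (a i)

lemma mergedDir_apply_left_eq_right : mergedDir a k l k = mergedDir a k l l := by
  simp [mergedDir]

variable [Fintype ι]

lemma sum_inner_eq_of_apply_eq (hkl : k ≠ l) {w : ι → E} (hw : w k = w l) :
    ∑ i, ⟪a i, w i⟫ = ⟪a k + a l, w k⟫ + ∑ i ∈ univ \ {k, l}, ⟪a i, w i⟫ := by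
  rw [sum_univ_eq_add_add_sum_sdiff_pair _ hkl, ← hw, inner_add_left]

lemma abs_sum_inner_le_mergedNorm_mul (hkl : k ≠ l) {w : ι → E} (hw : w k = w l) :
    |∑ i, ⟪a i, w i⟫| ≤ mergedNorm a k l * ‖w‖ := by
  have hblock (v : E) (i : ι) : |⟪v, w i⟫| ≤ ‖v‖ * ‖w‖ :=
    (abs_real_inner_le_norm _ _).trans
      (mul_le_mul_of_nonneg_left (norm_le_pi_norm w i) (norm_nonneg v))
  rw [sum_inner_eq_of_apply_eq hkl hw, mergedNorm, add_mul, sum_mul]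
  exact (abs_add_le _ _).trans <| add_le_add (hblock _ k) <|
    (abs_sum_le_sum_abs _ _).trans (sum_le_sum fun i _ => hblock (a i) i)

lemma norm_mergedDir_le_one : ‖mergedDir a k l‖ ≤ 1 :=
  (pi_norm_le_iff_of_nonneg zero_le_one).2 fun i => by
    unfold mergedDir
    split_ifs <;> exact norm_normalize_le_one _

lemma sum_inner_mergedDir (hkl : k ≠ l) : ∑ i, ⟪a i, mergedDir a k l i⟫ = mergedNorm a k l := by
  rw [sum_inner_eq_of_apply_eq hkl mergedDir_apply_left_eq_right, mergedNorm]
  congr 1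
  · simp [mergedDir, real_inner_normalize_right]
  · refine sum_congr rfl fun i hi => ?_
    have hikl : ¬(i = k ∨ i = l) := by simpa using hi
    simp [mergedDir, hikl, real_inner_normalize_right]

end Merged

theorem infDist_hyperplane_on_diagonal_general
    (m n : ℕ)
    (a : Fin m → EuclideanSpace ℝ (Fin n)) (b : ℝ)
    (f : (Fin m → EuclideanSpace ℝ (Fin n)) → ℝ)
    (hf : ∀ x, f x = (∑ i, ⟪a i, x i⟫) + b)
    (k l : Fin m) (hkl : k ≠ l)
    (hmerged : a k + a l ≠ 0 ∨ ∃ i ∈ Finset.univ \ ({k, l} : Finset (Fin m)), a i ≠ 0)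
    (x : Fin m → EuclideanSpace ℝ (Fin n)) (hx : x k = x l) :
    Metric.infDist x {y | f y = 0 ∧ y k = y l}
      = |f x| / (‖a k + a l‖ + ∑ i ∈ Finset.univ \ {k, l}, ‖a i‖) := by
  change _ = |f x| / mergedNorm a k l
  have hC := mergedNorm_pos hmerged
  have hf_sub (z) : f x - f z = ∑ i, ⟪a i, (x - z) i⟫ := by
    simp only [hf, Pi.sub_apply, inner_sub_right, sum_sub_distrib]
    ring
  set t := f x / mergedNorm a k l
  refine Metric.infDist_eq_of_mem_of_forall_le (y := x - t • mergedDir a k l) ⟨?_, ?_⟩ ?_ ?_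
  · have h := hf_sub (x - t • mergedDir a k l)
    simp only [sub_sub_cancel, Pi.smul_apply, real_inner_smul_right, ← mul_sum,
      sum_inner_mergedDir hkl, t, div_mul_cancel₀ _ hC.ne'] at h
    linarith
  · simp only [Pi.sub_apply, Pi.smul_apply, hx]
    rw [mergedDir_apply_left_eq_right]
  · rw [dist_eq_norm, sub_sub_cancel, norm_smul, Real.norm_eq_abs, abs_div, abs_of_pos hC]
    exact mul_le_of_le_one_right (by positivity) norm_mergedDir_le_one
  · rintro z ⟨hfz, hzkl⟩
    rw [div_le_iff₀' hC, dist_eq_norm]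
    calc |f x| = |∑ i, ⟪a i, (x - z) i⟫| := by rw [← hf_sub, hfz, sub_zero]
      _ ≤ mergedNorm a k l * ‖x - z‖ :=
        abs_sum_inner_le_mergedNorm_mul hkl (by simp [hx, hzkl])

theorem infDist_hyperplane_on_diagonal
    (m n : ℕ) (hm : 2 ≤ m) (hn : 1 ≤ n)
    (a : Fin m → EuclideanSpace ℝ (Fin n)) (ha : a ≠ 0) (b : ℝ)
    (f : (Fin m → EuclideanSpace ℝ (Fin n)) → ℝ)
    (hf : ∀ x, f x = (∑ i, ⟪a i, x i⟫) + b)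
    (k l : Fin m) (hkl : k ≠ l)
    (hmerged : a k + a l ≠ 0 ∨ ∃ i ∈ Finset.univ \ ({k, l} : Finset (Fin m)), a i ≠ 0)
    (x : Fin m → EuclideanSpace ℝ (Fin n)) (hx : x k = x l) :
    Metric.infDist x {y | f y = 0 ∧ y k = y l}
      = |f x| / (‖a k + a l‖ + ∑ i ∈ Finset.univ \ {k, l}, ‖a i‖) :=
  infDist_hyperplane_on_diagonal_general m n a b f hf k l hkl hmerged x hx
end

section
/- Soundness of the max rule for disjunction: in any (pseudo e)metric space, if r is a sound robustness estimate for A at x and q is a sound robustness estimate for B at x, then max r q is a sound robustness estimate for A ∪ B at x; that is, -(EMetric.infEdist x (A ∪ B)) ≤ (max r q : EReal) and (max r q : EReal) ≤ EMetric.infEdist x (A ∪ B)ᶜ. -/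
namespace Metric

variable {X : Type*} [PseudoEMetricSpace X] {x : X} {A B : Set X}

def IsSoundRobustnessEstimate (x : X) (A : Set X) (r : ℝ) : Prop :=
  -(infEDist x A : EReal) ≤ r ∧ (r : EReal) ≤ infEDist x Aᶜ

theorem neg_infEDist_union_le_max {r q : EReal} (hr : -(infEDist x A : EReal) ≤ r)
    (hq : -(infEDist x B : EReal) ≤ q) : -(infEDist x (A ∪ B) : EReal) ≤ max r q := by
  rw [EReal.neg_le, infEDist_union, EReal.coe_ennreal_strictMono.monotone.map_min]
  exact le_min ((EReal.neg_le_neg_iff.mpr (le_max_left r q)).trans (EReal.neg_le.mp hr))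
    ((EReal.neg_le_neg_iff.mpr (le_max_right r q)).trans (EReal.neg_le.mp hq))

theorem max_le_infEDist_compl_union {r q : EReal} (hr : r ≤ infEDist x Aᶜ)
    (hq : q ≤ infEDist x Bᶜ) : max r q ≤ infEDist x (A ∪ B)ᶜ := by
  rw [Set.compl_union]
  exact max_le (hr.trans (EReal.coe_ennreal_le_coe_ennreal_iff.mpr
    (infEDist_anti Set.inter_subset_left)))
    (hq.trans (EReal.coe_ennreal_le_coe_ennreal_iff.mpr (infEDist_anti Set.inter_subset_right)))

theorem IsSoundRobustnessEstimate.union {r q : ℝ} (hr : IsSoundRobustnessEstimate x A r)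
    (hq : IsSoundRobustnessEstimate x B q) :
    IsSoundRobustnessEstimate x (A ∪ B) (max r q) := by
  rw [IsSoundRobustnessEstimate, EReal.coe_strictMono.monotone.map_max]
  exact ⟨neg_infEDist_union_le_max hr.1 hq.1, max_le_infEDist_compl_union hr.2 hq.2⟩

end Metric

theorem max_rule_sound_for_union {X : Type*} [PseudoEMetricSpace X]
    (x : X) (A B : Set X) (r q : ℝ)
    (hrA₁ : -(EMetric.infEdist x A : EReal) ≤ (r : EReal))
    (hrA₂ : (r : EReal) ≤ (EMetric.infEdist x Aᶜ : EReal))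
    (hqB₁ : -(EMetric.infEdist x B : EReal) ≤ (q : EReal))
    (hqB₂ : (q : EReal) ≤ (EMetric.infEdist x Bᶜ : EReal)) :
    -(EMetric.infEdist x (A ∪ B) : EReal) ≤ ((max r q : ℝ) : EReal) ∧
    ((max r q : ℝ) : EReal) ≤ (EMetric.infEdist x (A ∪ B)ᶜ : EReal) :=
  Metric.IsSoundRobustnessEstimate.union ⟨hrA₁, hrA₂⟩ ⟨hqB₁, hqB₂⟩
end

section
/- Soundness of the supremum rule (existential/until modality): in any (pseudo e)metric space, let T be a type, A : T → Set X and r : T → ℝ such that for every t, r t is a sound robustness estimate for A t at x. Then -(EMetric.infEdist x (⋃ t, A t)) ≤ ⨆ t, (r t : EReal) and ⨆ t, (r t : EReal) ≤ EMetric.infEdist x (⋃ t, A t)ᶜ, where the supremum is taken in EReal. -/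
/-! The distance to a union is the infimum of the distances to its members, so the lower bounds
pass to the union; the complement of the union lies in every complement, so the upper bounds do
too. -/

open scoped ENNReal

namespace EReal

theorem gc_toENNReal_coe_ennreal : GaloisConnection toENNReal ((↑) : ℝ≥0∞ → EReal) := by
  intro a b
  constructor
  · intro hab
    calc a ≤ max 0 a := le_max_right 0 a
      _ = a.toENNReal := coe_toENNReal_eq_max.symm
      _ ≤ b := coe_ennreal_le_coe_ennreal_iff.2 hab
  · intro hab
    simpa only [toENNReal_coe] using toENNReal_le_toENNReal hab

theorem coe_ennreal_iInf {ι : Sort*} (f : ι → ℝ≥0∞) :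
    ((⨅ i, f i : ℝ≥0∞) : EReal) = ⨅ i, (f i : EReal) :=
  gc_toENNReal_coe_ennreal.u_iInf

theorem neg_iInf_le_iSup {ι : Sort*} {a b : ι → EReal} (h : ∀ i, -a i ≤ b i) :
    -(⨅ i, a i) ≤ ⨆ i, b i :=
  EReal.neg_le.2 <| le_iInf fun i => EReal.neg_le.1 <| (h i).trans (le_iSup b i)

end EReal

theorem sup_rule_sound_for_iUnion {X : Type*} [PseudoEMetricSpace X]
    (x : X) (T : Type*) (A : T → Set X) (r : T → ℝ)
    (h : ∀ t, -(EMetric.infEdist x (A t) : EReal) ≤ (r t : EReal) ∧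
              (r t : EReal) ≤ (EMetric.infEdist x (A t)ᶜ : EReal)) :
    -(EMetric.infEdist x (⋃ t, A t) : EReal) ≤ ⨆ t, (r t : EReal) ∧
    (⨆ t, (r t : EReal)) ≤ (EMetric.infEdist x (⋃ t, A t)ᶜ : EReal) := by
  refine ⟨?_, iSup_le fun t => (h t).2.trans ?_⟩
  · have hunion : EMetric.infEdist x (⋃ t, A t) = ⨅ t, EMetric.infEdist x (A t) :=
      Metric.infEDist_iUnion A x
    rw [hunion, EReal.coe_ennreal_iInf]
    exact EReal.neg_iInf_le_iSup fun t => (h t).1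
  · exact EReal.coe_ennreal_le_coe_ennreal_iff.2 <|
      Metric.infEDist_anti <| Set.compl_subset_compl.2 <| Set.subset_iUnion A t
end

section
/- Soundness of the infimum rule (universal/globally modality): in any (pseudo e)metric space, let T be a type, A : T → Set X and r : T → ℝ such that for every t, r t is a sound robustness estimate for A t at x. Then -(EMetric.infEdist x (⋂ t, A t)) ≤ ⨅ t, (r t : EReal) and ⨅ t, (r t : EReal) ≤ EMetric.infEdist x (⋂ t, A t)ᶜ, where the infimum is taken in EReal. -/
open scoped ENNReal

theorem inf_rule_sound_for_iInter {X : Type*} [PseudoEMetricSpace X]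
    (x : X) (T : Type*) (A : T → Set X) (r : T → ℝ)
    (h : ∀ t, -(EMetric.infEdist x (A t) : EReal) ≤ (r t : EReal) ∧
              (r t : EReal) ≤ (EMetric.infEdist x (A t)ᶜ : EReal)) :
    -(EMetric.infEdist x (⋂ t, A t) : EReal) ≤ ⨅ t, (r t : EReal) ∧
    (⨅ t, (r t : EReal)) ≤ (EMetric.infEdist x (⋂ t, A t)ᶜ : EReal) := by
  constructor
  · refine le_iInf fun t => le_trans ?_ (h t).1
    exact EReal.neg_le_neg_iff.2 <| EReal.coe_ennreal_le_coe_ennreal_iff.2 <|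
      Metric.infEDist_anti (Set.iInter_subset A t)
  · calc ⨅ t, (r t : EReal) ≤ ⨅ t, (Metric.infEDist x (A t)ᶜ : EReal) := iInf_mono fun t => (h t).2
      _ = Metric.infEDist x (⋂ t, A t)ᶜ := by
        rw [Set.compl_iInter, Metric.infEDist_iUnion, EReal.coe_ennreal_iInf]
end
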